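/- In intuitionistic linear logic extended with double-negation elimination (¬¬A ⊢ A), the rule 'from !Γ, A ⊢ ?B infer !Γ, ?A ⊢ ?B' is derivable, where ?C abbreviates ¬!¬C. -/

import Mathlib

/-- Formulas of first-order intuitionistic linear logic (de Bruijn indices,
terms are variables only). -/
inductive Fml : Type
  | atom : ℕ → List ℕ → Fml
  | one : Fml
  | zero : Fml
  | top : Fml
  | tens : Fml → Fml → Fml
  | amp : Fml → Fml → Fml
  | oplus : Fml → Fml → Fml
  | limp : Fml → Fml → Fml
  | bang : Fml → Fml
  | all : Fml → Fml
  | ex : Fml → Fml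

namespace Fml

/-- Lift a renaming under a binder. -/
def liftF (f : ℕ → ℕ) : ℕ → ℕ
  | 0 => 0
  | n + 1 => f n + 1

/-- Apply a renaming of variables to a formula. -/
def rename (f : ℕ → ℕ) : Fml → Fml
  | atom p l => atom p (l.map f)
  | one => one
  | zero => zero
  | top => top
  | tens A B => tens (A.rename f) (B.rename f)
  | amp A B => amp (A.rename f) (B.rename f)
  | oplus A B => oplus (A.rename f) (B.rename f)
  | limp A B => limp (A.rename f) (B.rename f)
  | bang A => bang (A.rename f)
  | all A => all (A.rename (liftF f))
  | ex A => ex (A.rename (liftF f))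

/-- Shift all free variables up by one. -/
def shift (A : Fml) : Fml := A.rename Nat.succ

/-- Substitute variable `t` for de Bruijn index 0. -/
def substV (t : ℕ) (A : Fml) : Fml :=
  A.rename (fun n => match n with | 0 => t | Nat.succ m => m)

/-- Linear negation `¬A := A ⊸ 0`. -/
def neg (A : Fml) : Fml := limp A zero

/-- `?A := ¬!¬A`. -/
def quest (A : Fml) : Fml := neg (bang (neg A))

end Fml

open Fml

/-- Sequent calculus for intuitionistic linear logic, extended by an
axiom schema `ax` (axioms of the form A ⊢ B). -/
inductive Deriv (ax : Fml → Fml → Prop) : List Fml → Fml → Prop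
  | id (A) : Deriv ax [A] A
  | ofAx {A B : Fml} : ax A B → Deriv ax [A] B
  | exch {Γ Δ : List Fml} {A : Fml} : Γ.Perm Δ → Deriv ax Γ A → Deriv ax Δ A
  | cut {Γ Δ : List Fml} {A C : Fml} : Deriv ax Γ A → Deriv ax (A :: Δ) C → Deriv ax (Γ ++ Δ) C
  | oneL {Γ : List Fml} {C : Fml} : Deriv ax Γ C → Deriv ax (one :: Γ) C
  | oneR : Deriv ax [] one
  | topR {Γ : List Fml} : Deriv ax Γ top
  | zeroL {Γ : List Fml} {C : Fml} : Deriv ax (zero :: Γ) C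
  | tensR {Γ Δ : List Fml} {A B : Fml} : Deriv ax Γ A → Deriv ax Δ B → Deriv ax (Γ ++ Δ) (tens A B)
  | tensL {Γ : List Fml} {A B C : Fml} : Deriv ax (A :: B :: Γ) C → Deriv ax (tens A B :: Γ) C
  | limpR {Γ : List Fml} {A B : Fml} : Deriv ax (A :: Γ) B → Deriv ax Γ (limp A B)
  | limpL {Γ Δ : List Fml} {A B C : Fml} : Deriv ax Γ A → Deriv ax (B :: Δ) C →
      Deriv ax (limp A B :: (Γ ++ Δ)) C
  | ampR {Γ : List Fml} {A B : Fml} : Deriv ax Γ A → Deriv ax Γ B → Deriv ax Γ (amp A B)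
  | ampL₁ {Γ : List Fml} {A B C : Fml} : Deriv ax (A :: Γ) C → Deriv ax (amp A B :: Γ) C
  | ampL₂ {Γ : List Fml} {A B C : Fml} : Deriv ax (B :: Γ) C → Deriv ax (amp A B :: Γ) C
  | oplusR₁ {Γ : List Fml} {A B : Fml} : Deriv ax Γ A → Deriv ax Γ (oplus A B)
  | oplusR₂ {Γ : List Fml} {A B : Fml} : Deriv ax Γ B → Deriv ax Γ (oplus A B)
  | oplusL {Γ : List Fml} {A B C : Fml} : Deriv ax (A :: Γ) C → Deriv ax (B :: Γ) C →
      Deriv ax (oplus A B :: Γ) C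
  | allR {Γ : List Fml} {A : Fml} : Deriv ax (Γ.map shift) A → Deriv ax Γ (all A)
  | allL {Γ : List Fml} {A C : Fml} (t : ℕ) : Deriv ax (substV t A :: Γ) C → Deriv ax (all A :: Γ) C
  | exR {Γ : List Fml} {A : Fml} (t : ℕ) : Deriv ax Γ (substV t A) → Deriv ax Γ (ex A)
  | exL {Γ : List Fml} {A C : Fml} : Deriv ax (A :: Γ.map shift) (shift C) → Deriv ax (ex A :: Γ) C
  | con {Γ : List Fml} {A C : Fml} : Deriv ax (bang A :: bang A :: Γ) C → Deriv ax (bang A :: Γ) C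
  | wkn {Γ : List Fml} {A C : Fml} : Deriv ax Γ C → Deriv ax (bang A :: Γ) C
  | bangR {Γ : List Fml} {A : Fml} : Deriv ax (Γ.map bang) A → Deriv ax (Γ.map bang) (bang A)
  | bangL {Γ : List Fml} {A C : Fml} : Deriv ax (A :: Γ) C → Deriv ax (bang A :: Γ) C

/-- No extra axioms: plain ILL. -/
def NoAx : Fml → Fml → Prop := fun _ _ => False

/-- The promotion axiom schema `A ⊢ !A`. -/
def PRO : Fml → Fml → Prop := fun A B => B = Fml.bang A

/-- The double-negation elimination schema `¬¬A ⊢ A`. -/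
def DNE : Fml → Fml → Prop := fun A B => A = Fml.neg (Fml.neg B)

/-- Provable equivalence: both `A ⊢ B` and `B ⊢ A`. -/
def EquivD (ax : Fml → Fml → Prop) (A B : Fml) : Prop :=
  Deriv ax [A] B ∧ Deriv ax [B] A

/-!
Cutting the hypothesis `!Γ, A ⊢ ?B` against `?B, !¬B ⊢ 0` gives `!Γ, !¬B, A ⊢ 0`, hence
`!Γ, !¬B ⊢ ¬A`. The whole context is now banged, so promotion yields `!Γ, !¬B ⊢ !¬A`, which
`?A = ¬!¬A` consumes on the left: `?A, !Γ, !¬B ⊢ 0`, i.e. `?A, !Γ ⊢ ?B`.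
-/

open Fml

lemma Fml.exists_eq_map_bang_of_forall_mem :
    ∀ Γ : List Fml, (∀ C ∈ Γ, ∃ D, C = bang D) → ∃ Δ : List Fml, Γ = Δ.map bang
  | [], _ => ⟨[], rfl⟩
  | C :: Γ, hΓ => by
    obtain ⟨D, rfl⟩ := hΓ C List.mem_cons_self
    obtain ⟨Δ, rfl⟩ :=
      exists_eq_map_bang_of_forall_mem Γ fun C hC => hΓ C (List.mem_cons_of_mem _ hC)
    exact ⟨D :: Δ, rfl⟩

namespace Deriv

variable {ax : Fml → Fml → Prop}

lemma swap {Γ : List Fml} {A B C : Fml} (h : Deriv ax (A :: B :: Γ) C) :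
    Deriv ax (B :: A :: Γ) C :=
  exch (List.Perm.swap B A Γ) h

lemma negL {Γ : List Fml} {A : Fml} (h : Deriv ax Γ A) : Deriv ax (neg A :: Γ) zero := by
  simpa [neg] using limpL (Δ := []) h zeroL

lemma bang_neg_cons_of_quest {Γ : List Fml} {B : Fml} (h : Deriv ax Γ (quest B)) :
    Deriv ax (bang (neg B) :: Γ) zero :=
  exch (List.perm_append_singleton _ _) (cut h (negL (id (bang (neg B)))))

theorem quest_cons_of_cons_map_bang {Δ : List Fml} {A B : Fml}
    (h : Deriv ax (A :: Δ.map bang) (quest B)) :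
    Deriv ax (quest A :: Δ.map bang) (quest B) := by
  have hA : Deriv ax (A :: bang (neg B) :: Δ.map bang) zero :=
    swap (bang_neg_cons_of_quest h)
  have hPromote : Deriv ax ((neg B :: Δ).map bang) (bang (neg A)) :=
    bangR (limpR hA)
  exact limpR (swap (negL hPromote))

end Deriv

theorem stmt16 (Γ : List Fml) (A B : Fml)
    (hΓ : ∀ C ∈ Γ, ∃ D, C = Fml.bang D)
    (h : Deriv DNE (A :: Γ) (Fml.quest B)) :
    Deriv DNE (Fml.quest A :: Γ) (Fml.quest B) := by
  obtain ⟨Δ, rfl⟩ := Fml.exists_eq_map_bang_of_forall_mem Γ hΓ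
  exact Deriv.quest_cons_of_cons_map_bang h
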